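/- arXiv:2305.03540 — 3 statements merged into one kernel-verified Lean document; each statement's English description precedes it below -/
import Mathlib

section
/- For every integer k ≥ 1, the cycle graph C_{3k} on 3k vertices is S-perfect. -/
open SimpleGraph

/-- A set `T` of vertices is *S-independent* in `G` if any two distinct vertices of `T`
are at distance at least 3 in `G` (equivalently, no two of them lie in a common star
subgraph of `G`): they are non-adjacent and have no common neighbor. -/
def SimpleGraph.SIndepSet {V : Type*} (G : SimpleGraph V) (T : Set V) : Prop :=
  ∀ u ∈ T, ∀ w ∈ T, u ≠ w → ¬ G.Adj u w ∧ ∀ x : V, ¬ (G.Adj u x ∧ G.Adj x w)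

/-- `D` is a dominating set of `G`: every vertex is in `D` or adjacent to a vertex of `D`. -/
def SimpleGraph.DominatingSet {V : Type*} (G : SimpleGraph V) (D : Finset V) : Prop :=
  ∀ v : V, v ∈ D ∨ ∃ d ∈ D, G.Adj d v

/-- `α_S(G)`: the maximum size of an S-independent set of vertices of `G`. -/
noncomputable def alphaS {V : Type*} (G : SimpleGraph V) : ℕ :=
  sSup {n | ∃ T : Finset V, G.SIndepSet ↑T ∧ T.card = n}

/-- `θ_S(G)`: the domination number of `G`, i.e. the minimum size of a dominating set
(equivalently, the minimum number of stars needed to cover all vertices of `G`). -/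
noncomputable def thetaS {V : Type*} (G : SimpleGraph V) : ℕ :=
  sInf {n | ∃ D : Finset V, G.DominatingSet D ∧ D.card = n}

/-- `G` is *S-perfect* if `α_S(H) = θ_S(H)` for every induced subgraph `H` of `G`
(induced on any subset of the vertices). -/
def SPerfect {V : Type*} (G : SimpleGraph V) : Prop :=
  ∀ s : Set V, alphaS (G.induce s) = thetaS (G.induce s)

section GeneralLemmas

variable {V : Type*}

lemma thetaS_le' (G : SimpleGraph V) (D : Finset V) (h : G.DominatingSet D) :
    thetaS G ≤ D.card :=
  Nat.sInf_le ⟨D, h, rfl⟩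

lemma le_alphaS' [Fintype V] (G : SimpleGraph V) (T : Finset V) (h : G.SIndepSet ↑T) :
    T.card ≤ alphaS G := by
  apply le_csSup
  · refine ⟨Fintype.card V, ?_⟩
    rintro m ⟨T', _, rfl⟩
    exact T'.card_le_univ
  · exact ⟨T, h, rfl⟩

lemma alphaS_le_thetaS' [Fintype V] (G : SimpleGraph V) : alphaS G ≤ thetaS G := by
  classical
  have hmem : thetaS G ∈ {m | ∃ D : Finset V, G.DominatingSet D ∧ D.card = m} :=
    Nat.sInf_mem ⟨Finset.univ.card, Finset.univ, fun v => Or.inl (Finset.mem_univ v), rfl⟩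
  obtain ⟨D, hD, hcard⟩ := hmem
  apply csSup_le
  · exact ⟨0, ∅, fun u hu => absurd hu (by simp), by simp⟩
  rintro m ⟨T, hT, rfl⟩
  rw [← hcard]
  have hdom : ∀ t : V, ∃ d, d ∈ D ∧ (d = t ∨ G.Adj d t) := by
    intro t
    rcases hD t with h | ⟨d, hd, hadj⟩
    · exact ⟨t, h, Or.inl rfl⟩
    · exact ⟨d, hd, Or.inr hadj⟩
  choose f hfD hf using hdom
  refine Finset.card_le_card_of_injOn f (fun t _ => hfD t) ?_
  intro a ha b hb hab
  by_contra hne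
  obtain ⟨hnadj, hnc⟩ := hT a ha b hb hne
  rcases hf a with h1 | h1 <;> rcases hf b with h2 | h2
  · rw [h1, h2] at hab; exact hne hab
  · exact hnadj (by rw [← h1, hab]; exact h2)
  · have hba : G.Adj b a := by rw [← h2, ← hab]; exact h1
    exact hnadj hba.symm
  · exact hnc (f a) ⟨h1.symm, by rw [hab]; exact h2⟩

end GeneralLemmas

section Cycle

open Fin.NatCast

variable {n : ℕ} [NeZero n]

lemma val_one_of (hn : 3 ≤ n) : (1 : Fin n).val = 1 := by
  rw [Fin.val_one']; exact Nat.mod_eq_of_lt (by omega)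

lemma sub_val_one (hn : 3 ≤ n) {u w : Fin n} (h : (u - w).val = 1) : u = w + 1 := by
  have h1 : u - w = 1 := Fin.ext (by rw [h, val_one_of hn])
  rw [sub_eq_iff_eq_add] at h1
  rw [h1, add_comm]

lemma cycle_adj_iff (hn : 3 ≤ n) {u w : Fin n} :
    (cycleGraph n).Adj u w ↔ u = w + 1 ∨ w = u + 1 := by
  rw [cycleGraph_adj']
  constructor
  · rintro (h | h)
    · exact Or.inl (sub_val_one hn h)
    · exact Or.inr (sub_val_one hn h)
  · rintro (h | h)
    · left; rw [h, add_sub_cancel_left, val_one_of hn]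
    · right; rw [h, add_sub_cancel_left, val_one_of hn]

lemma exists_TD (hn : 3 ≤ n) (hdvd : 3 ∣ n) (s : Set (Fin n)) :
    ∃ T D : Finset ↥s, ((cycleGraph n).induce s).SIndepSet ↑T ∧
      ((cycleGraph n).induce s).DominatingSet D ∧ D.card ≤ T.card := by
  classical
  have hadj : ∀ a b : ↥s, ((cycleGraph n).induce s).Adj a b ↔ (cycleGraph n).Adj ↑a ↑b :=
    fun a b => Iff.rfl
  by_cases hs : s = Set.univ
  · subst hs
    have hvadd : ∀ a : Fin n, (a + 1).val % 3 = (a.val + 1) % 3 := by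
      intro a
      rw [Fin.val_add, val_one_of hn, Nat.mod_mod_of_dvd _ hdvd]
    have key : ∀ a b : Fin n, b = a + 1 → b.val % 3 = (a.val + 1) % 3 := fun a b h => by
      rw [h]; exact hvadd a
    refine ⟨Finset.univ.filter (fun a : ↥(Set.univ : Set (Fin n)) => (a : Fin n).val % 3 = 0),
            Finset.univ.filter (fun a : ↥(Set.univ : Set (Fin n)) => (a : Fin n).val % 3 = 1),
            ?_, ?_, ?_⟩
    · intro u hu w hw hne
      have hu' : (u : Fin n).val % 3 = 0 := by simpa using hu
      have hw' : (w : Fin n).val % 3 = 0 := by simpa using hw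
      constructor
      · intro h
        rcases (cycle_adj_iff hn).mp ((hadj u w).mp h) with h1 | h1
        · have := key _ _ h1; omega
        · have := key _ _ h1; omega
      · rintro x ⟨h1, h2⟩
        rcases (cycle_adj_iff hn).mp ((hadj u x).mp h1) with h3 | h3 <;>
          rcases (cycle_adj_iff hn).mp ((hadj x w).mp h2) with h4 | h4
        · have e1 := key _ _ h3; have e2 := key _ _ h4; omega
        · exact hne (Subtype.ext (h3.trans h4.symm))
        · exact hne (Subtype.ext (add_right_cancel (h3.symm.trans h4)))
        · have e1 := key _ _ h3; have e2 := key _ _ h4; omega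
    · intro a
      rcases (show (a : Fin n).val % 3 = 0 ∨ (a : Fin n).val % 3 = 1 ∨ (a : Fin n).val % 3 = 2
          by omega) with h | h | h
      · right
        refine ⟨⟨(a : Fin n) + 1, Set.mem_univ _⟩, ?_, ?_⟩
        · simp only [Finset.mem_filter, Finset.mem_univ, true_and]
          have := hvadd (a : Fin n); omega
        · rw [hadj]
          exact (cycle_adj_iff hn).mpr (Or.inl rfl)
      · left
        simp only [Finset.mem_filter, Finset.mem_univ, true_and]
        exact h
      · right
        refine ⟨⟨(a : Fin n) - 1, Set.mem_univ _⟩, ?_, ?_⟩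
        · simp only [Finset.mem_filter, Finset.mem_univ, true_and]
          have h1 := key ((a : Fin n) - 1) (a : Fin n) (sub_add_cancel _ _).symm
          omega
        · rw [hadj]
          exact (cycle_adj_iff hn).mpr (Or.inr (sub_add_cancel _ _).symm)
    · refine Finset.card_le_card_of_injOn
        (fun x => ⟨(x : Fin n) - 1, Set.mem_univ _⟩) ?_ ?_
      · intro x hx
        simp only [Finset.mem_coe, Finset.mem_filter, Finset.mem_univ, true_and] at hx ⊢
        have h1 := key ((x : Fin n) - 1) (x : Fin n) (sub_add_cancel _ _).symm
        omega
      · intro a _ b _ hab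
        have h1 : (a : Fin n) - 1 = (b : Fin n) - 1 := congrArg Subtype.val hab
        exact Subtype.ext (sub_left_inj.mp h1)
  · -- there is a gap vertex
    obtain ⟨g, hg⟩ : ∃ g, g ∉ s := by
      by_contra h; push_neg at h; exact hs (Set.eq_univ_of_forall h)
    have ex : ∀ v : Fin n, ∃ t : ℕ, v - ((t + 1 : ℕ) : Fin n) ∉ s := by
      intro v
      by_cases hvg : v = g
      · refine ⟨n - 1, ?_⟩
        have h0 : ((n - 1 + 1 : ℕ) : Fin n) = 0 := by
          rw [show n - 1 + 1 = n by omega, Fin.natCast_self]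
        rw [h0, sub_zero, hvg]; exact hg
      · refine ⟨(v - g).val - 1, ?_⟩
        have hne0 : (v - g).val ≠ 0 := by
          intro h0
          have : v - g = 0 := Fin.ext (by simp [h0])
          exact hvg (sub_eq_zero.mp this)
        rw [show (v - g).val - 1 + 1 = (v - g).val by omega, Fin.cast_val_eq_self,
          sub_sub_cancel]
        exact hg
    set rr : Fin n → ℕ := fun v => Nat.find (ex v) + 1 with hrr
    have h01 : ((0 + 1 : ℕ) : Fin n) = 1 := by norm_num
    have hcast : ∀ m : ℕ, ((m + 1 : ℕ) : Fin n) = (m : Fin n) + 1 := by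
      intro m; push_cast; ring
    have hshift : ∀ (v : Fin n) (m : ℕ),
        v - ((m + 1 + 1 : ℕ) : Fin n) = (v - 1) - ((m + 1 : ℕ) : Fin n) := by
      intro v m
      rw [hcast (m + 1), sub_add_eq_sub_sub, sub_right_comm]
    have rione : ∀ v : Fin n, v - 1 ∉ s → rr v = 1 := by
      intro v hv
      have h0 : Nat.find (ex v) = 0 := by
        rw [Nat.find_eq_zero, h01]
        exact hv
      simp only [hrr]; omega
    have rstep : ∀ v : Fin n, v - 1 ∈ s → rr v = rr (v - 1) + 1 := by
      intro v hv
      have h0 : Nat.find (ex v) = Nat.find (ex (v - 1)) + 1 := by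
        rw [Nat.find_eq_iff]
        constructor
        · rw [hshift v (Nat.find (ex (v - 1)))]
          exact Nat.find_spec (ex (v - 1))
        · intro m hm
          match m with
          | 0 =>
            intro hmem
            exact hmem (by rw [h01]; exact hv)
          | j + 1 =>
            intro hmem
            rw [hshift v j] at hmem
            exact Nat.find_min (ex (v - 1)) (by omega) hmem
      simp only [hrr]; omega
    have rpos : ∀ v : Fin n, 1 ≤ rr v := by
      intro v; simp only [hrr]; omega
    have rmem : ∀ v : Fin n, rr v ≠ 1 → v - 1 ∈ s := by
      intro v h
      by_contra h1
      exact h (rione v h1)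
    have rsucc : ∀ v : Fin n, v ∈ s → rr (v + 1) = rr v + 1 := by
      intro v hv
      have h1 := rstep (v + 1) (by rwa [add_sub_cancel_right])
      rwa [add_sub_cancel_right] at h1
    have step : ∀ a b : ↥s, (b : Fin n) = (a : Fin n) + 1 → rr ↑b = rr ↑a + 1 := by
      intro a b h; rw [h]; exact rsucc _ a.2
    refine ⟨Finset.univ.filter (fun a : ↥s => rr ↑a % 3 = 1),
            Finset.univ.filter (fun a : ↥s =>
              rr ↑a % 3 = 2 ∨ (((a : Fin n) + 1) ∉ s ∧ rr ↑a % 3 = 1)),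
            ?_, ?_, ?_⟩
    · intro u hu w hw hne
      have hu' : rr ↑u % 3 = 1 := by simpa using hu
      have hw' : rr ↑w % 3 = 1 := by simpa using hw
      constructor
      · intro h
        rcases (cycle_adj_iff hn).mp ((hadj u w).mp h) with h1 | h1
        · have := step w u h1; omega
        · have := step u w h1; omega
      · rintro x ⟨h1, h2⟩
        rcases (cycle_adj_iff hn).mp ((hadj u x).mp h1) with h3 | h3 <;>
          rcases (cycle_adj_iff hn).mp ((hadj x w).mp h2) with h4 | h4
        · have e1 := step x u h3; have e2 := step w x h4; omega
        · exact hne (Subtype.ext (h3.trans h4.symm))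
        · exact hne (Subtype.ext (add_right_cancel (h3.symm.trans h4)))
        · have e1 := step u x h3; have e2 := step x w h4; omega
    · intro a
      rcases (show rr (↑a) % 3 = 0 ∨ rr ↑a % 3 = 1 ∨ rr ↑a % 3 = 2 by omega) with h | h | h
      · have hp := rpos (↑a : Fin n)
        have hmem : ((a : Fin n) - 1) ∈ s := rmem _ (by omega)
        have hstep := rstep (↑a : Fin n) hmem
        right
        refine ⟨⟨(a : Fin n) - 1, hmem⟩, ?_, ?_⟩
        · simp only [Finset.mem_filter, Finset.mem_univ, true_and]
          left; omega
        · rw [hadj]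
          exact (cycle_adj_iff hn).mpr (Or.inr (sub_add_cancel _ _).symm)
      · by_cases hv1 : ((a : Fin n) + 1) ∈ s
        · right
          refine ⟨⟨(a : Fin n) + 1, hv1⟩, ?_, ?_⟩
          · simp only [Finset.mem_filter, Finset.mem_univ, true_and]
            left
            have := rsucc (↑a : Fin n) a.2; omega
          · rw [hadj]
            exact (cycle_adj_iff hn).mpr (Or.inl rfl)
        · left
          simp only [Finset.mem_filter, Finset.mem_univ, true_and]
          exact Or.inr ⟨hv1, h⟩
      · left
        simp only [Finset.mem_filter, Finset.mem_univ, true_and]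
        exact Or.inl h
    · refine Finset.card_le_card_of_injOn
        (fun a : ↥s => if h : ((a : Fin n) - 1) ∈ s ∧ rr ↑a % 3 = 2
          then ⟨(a : Fin n) - 1, h.1⟩ else a) ?_ ?_
      · intro a ha
        simp only [Finset.mem_coe, Finset.mem_filter, Finset.mem_univ, true_and] at ha ⊢
        rcases ha with h2 | ⟨hnot, h1⟩
        · have hp := rpos (↑a : Fin n)
          have hmem : ((a : Fin n) - 1) ∈ s := rmem _ (by omega)
          have hstep := rstep (↑a : Fin n) hmem
          rw [dif_pos ⟨hmem, h2⟩]
          simp only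
          omega
        · rw [dif_neg (by rintro ⟨-, h2⟩; omega)]
          exact h1
      · intro a ha b hb hab
        rw [Finset.mem_coe, Finset.mem_filter] at ha hb
        simp only at hab
        by_cases hA : ((a : Fin n) - 1) ∈ s ∧ rr ↑a % 3 = 2 <;>
          by_cases hB : ((b : Fin n) - 1) ∈ s ∧ rr ↑b % 3 = 2
        · rw [dif_pos hA, dif_pos hB] at hab
          have h1 : (a : Fin n) - 1 = (b : Fin n) - 1 := congrArg Subtype.val hab
          exact Subtype.ext (sub_left_inj.mp h1)
        · rw [dif_pos hA, dif_neg hB] at hab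
          exfalso
          have hb1 : (b : Fin n) = (a : Fin n) - 1 := (congrArg Subtype.val hab).symm
          have hbs : ((a : Fin n) - 1) ∈ s := hA.1
          have hstep := rstep (↑a : Fin n) hbs
          rw [← hb1] at hstep
          have hA2 := hA.2
          rcases hb.2 with h2 | ⟨hnot, h1⟩
          · omega
          · apply hnot
            rw [hb1, sub_add_cancel]
            exact a.2
        · rw [dif_neg hA, dif_pos hB] at hab
          exfalso
          have ha1 : (a : Fin n) = (b : Fin n) - 1 := congrArg Subtype.val hab
          have has : ((b : Fin n) - 1) ∈ s := hB.1
          have hstep := rstep (↑b : Fin n) has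
          rw [← ha1] at hstep
          have hB2 := hB.2
          rcases ha.2 with h2 | ⟨hnot, h1⟩
          · omega
          · apply hnot
            rw [ha1, sub_add_cancel]
            exact b.2
        · rw [dif_neg hA, dif_neg hB] at hab
          exact hab

end Cycle

/-- For every integer `k ≥ 1`, the cycle graph `C_{3k}` on `3k` vertices is S-perfect. -/
theorem cycle_three_mul_SPerfect (k : ℕ) (hk : 1 ≤ k) :
    SPerfect (SimpleGraph.cycleGraph (3 * k)) := by
  intro s
  haveI : NeZero (3 * k) := ⟨by omega⟩
  haveI : Fintype ↥s := Fintype.ofFinite ↥s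
  obtain ⟨T, D, hT, hD, hle⟩ := exists_TD (n := 3 * k) (by omega) ⟨k, rfl⟩ s
  refine le_antisymm (alphaS_le_thetaS' _) ?_
  calc thetaS ((cycleGraph (3 * k)).induce s) ≤ D.card := thetaS_le' _ D hD
    _ ≤ T.card := hle
    _ ≤ alphaS _ := le_alphaS' _ T hT
end

section
/- For every odd integer k ≥ 3, no k-sun is S-perfect; in fact, every k-sun G with k odd satisfies α_S(G) ≠ θ_S(G). -/
open SimpleGraph

/-- `G` is a *k-sun* (`k ≥ 3`): it has `2k` distinct vertices `v 0, …, v (k-1)`,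
`u 0, …, u (k-1)` (and no others) such that `v 0 v 1 … v (k-1) v 0` is a
(not necessarily induced) cycle, each `u i` is adjacent exactly to `v i` and
`v (i+1)` (indices mod `k`), and each `u i` is simplicial. -/
def IsSun {V : Type*} (G : SimpleGraph V) (k : ℕ) : Prop :=
  ∃ hk : 3 ≤ k,
    haveI : NeZero k := ⟨by omega⟩
    ∃ v u : Fin k → V,
      Function.Injective v ∧ Function.Injective u ∧
      (∀ i j : Fin k, v i ≠ u j) ∧
      (∀ x : V, (∃ i, x = v i) ∨ (∃ i, x = u i)) ∧
      (∀ i : Fin k, G.Adj (v i) (v (i + 1))) ∧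
      (∀ i : Fin k, ∀ x : V, G.Adj (u i) x ↔ (x = v i ∨ x = v (i + 1))) ∧
      (∀ i : Fin k, ∀ x y : V, G.Adj (u i) x → G.Adj (u i) y → x ≠ y → G.Adj x y)

lemma fin_succ_ne {k : ℕ} [NeZero k] (hk : 3 ≤ k) (i : Fin k) : i + 1 ≠ i := by
  intro hEq
  have h2 := congrArg Fin.val hEq
  have h1 : (i + 1 : Fin k).val = (i.val + 1) % k := by
    simp [Fin.val_add]
  rw [h1] at h2
  rcases Nat.lt_or_ge (i.val + 1) k with h | h
  · rw [Nat.mod_eq_of_lt h] at h2; omega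
  · have hik := i.isLt
    have : i.val + 1 = k := by omega
    rw [this, Nat.mod_self] at h2; omega

lemma sun_lt {V : Type*} [Fintype V] (G : SimpleGraph V)
    (k : ℕ) (hodd : Odd k) (hk : 3 ≤ k) (h : IsSun G k) :
    alphaS G < thetaS G := by
  classical
  obtain ⟨hk3, h2⟩ := h
  haveI : NeZero k := ⟨by omega⟩
  obtain ⟨v, u, hvinj, huinj, hvu, hcover, hcyc, huadj, husimp⟩ := h2
  obtain ⟨m, hm⟩ := hodd
  have hemp : (Set.univ : Set V) = Set.univ := rfl
  have halpha : alphaS G ≤ m := by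
    apply csSup_le
    · refine ⟨0, ∅, ?_, by simp⟩
      intro a ha; simp at ha
    · rintro n ⟨T, hT, rfl⟩
      set J : V → Finset (Fin k) :=
        fun t => Finset.univ.filter (fun j => t = v j ∨ G.Adj t (v j)) with hJ
      have hJ2 : ∀ t : V, 2 ≤ (J t).card := by
        intro t
        have hsub : ∃ x : Fin k, ({x, x + 1} : Finset (Fin k)) ⊆ J t := by
          rcases hcover t with ⟨x, rfl⟩ | ⟨x, rfl⟩
          · refine ⟨x, ?_⟩
            intro j hj
            simp only [Finset.mem_insert, Finset.mem_singleton] at hj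
            simp only [hJ, Finset.mem_filter, Finset.mem_univ, true_and]
            rcases hj with hj | hj <;> rw [hj]
            · exact Or.inl rfl
            · exact Or.inr (hcyc x)
          · refine ⟨x, ?_⟩
            intro j hj
            simp only [Finset.mem_insert, Finset.mem_singleton] at hj
            simp only [hJ, Finset.mem_filter, Finset.mem_univ, true_and]
            rcases hj with hj | hj <;> rw [hj]
            · exact Or.inr ((huadj x (v x)).2 (Or.inl rfl))
            · exact Or.inr ((huadj x (v (x + 1))).2 (Or.inr rfl))
        obtain ⟨x, hx⟩ := hsub
        calc 2 = ({x, x + 1} : Finset (Fin k)).card := by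
                rw [Finset.card_pair (fin_succ_ne hk x).symm]
          _ ≤ (J t).card := Finset.card_le_card hx
      have hdisj : ∀ t ∈ T, ∀ t' ∈ T, t ≠ t' → Disjoint (J t) (J t') := by
        intro t ht t' ht' hne
        obtain ⟨hnadj, hnc⟩ := hT t ht t' ht' hne
        rw [Finset.disjoint_left]
        intro j hj hj'
        simp only [hJ, Finset.mem_filter, Finset.mem_univ, true_and] at hj hj'
        rcases hj with rfl | h1 <;> rcases hj' with h2 | h2
        · exact hne h2.symm
        · exact hnadj (h2.symm)
        · subst h2; exact hnadj h1
        · exact hnc (v j) ⟨h1, h2.symm⟩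
      have hcard : 2 * T.card ≤ k := by
        calc 2 * T.card = T.card • 2 := by rw [smul_eq_mul, mul_comm]
          _ ≤ ∑ t ∈ T, (J t).card := Finset.card_nsmul_le_sum T _ 2 (fun t _ => hJ2 t)
          _ = (T.biUnion J).card := (Finset.card_biUnion hdisj).symm
          _ ≤ (Finset.univ : Finset (Fin k)).card := Finset.card_le_univ _
          _ = k := by simp
      omega
  have htheta : m + 1 ≤ thetaS G := by
    apply le_csInf
    · exact ⟨Fintype.card V, Finset.univ, fun x => Or.inl (Finset.mem_univ x), rfl⟩
    · rintro n ⟨D, hD, rfl⟩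
      set W : V → Finset (Fin k) :=
        fun d => Finset.univ.filter (fun j => d = u j ∨ G.Adj d (u j)) with hW
      have hcov : (Finset.univ : Finset (Fin k)) ⊆ D.biUnion W := by
        intro i _
        rcases hD (u i) with hin | ⟨d, hd, hadj⟩
        · exact Finset.mem_biUnion.2 ⟨u i, hin, by simp [hW]⟩
        · exact Finset.mem_biUnion.2 ⟨d, hd, by simp [hW, hadj]⟩
      have hW2 : ∀ d ∈ D, (W d).card ≤ 2 := by
        intro d _
        rcases hcover d with ⟨x, rfl⟩ | ⟨x, rfl⟩
        · have hsub : W (v x) ⊆ {x, x - 1} := by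
            intro j hj
            simp only [hW, Finset.mem_filter, Finset.mem_univ, true_and] at hj
            simp only [Finset.mem_insert, Finset.mem_singleton]
            rcases hj with h | h
            · exact absurd h (hvu x j)
            · rcases (huadj j (v x)).1 h.symm with h1 | h1
              · exact Or.inl (hvinj h1).symm
              · right
                have : x = j + 1 := hvinj h1
                rw [this]; exact (add_sub_cancel_right j 1).symm
          calc (W (v x)).card ≤ ({x, x - 1} : Finset (Fin k)).card :=
                Finset.card_le_card hsub
            _ ≤ 2 := by
                apply (Finset.card_insert_le _ _).trans
                simp
        · have hsub : W (u x) ⊆ {x} := by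
            intro j hj
            simp only [hW, Finset.mem_filter, Finset.mem_univ, true_and] at hj
            simp only [Finset.mem_singleton]
            rcases hj with h | h
            · exact (huinj h).symm
            · rcases (huadj x (u j)).1 h with h1 | h1
              · exact absurd h1.symm (hvu x j)
              · exact absurd h1.symm (hvu (x + 1) j)
          calc (W (u x)).card ≤ ({x} : Finset (Fin k)).card := Finset.card_le_card hsub
            _ ≤ 2 := by simp
      have hcnt : k ≤ 2 * D.card := by
        calc k = (Finset.univ : Finset (Fin k)).card := by simp
          _ ≤ (D.biUnion W).card := Finset.card_le_card hcov
          _ ≤ ∑ d ∈ D, (W d).card := Finset.card_biUnion_le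
          _ ≤ ∑ d ∈ D, 2 := Finset.sum_le_sum hW2
          _ = 2 * D.card := by rw [Finset.sum_const, smul_eq_mul, mul_comm]
      omega
  omega

lemma isSun_induce_univ {V : Type*} (G : SimpleGraph V) (k : ℕ) (h : IsSun G k) :
    IsSun (G.induce (Set.univ : Set V)) k := by
  obtain ⟨hk3, h2⟩ := h
  haveI : NeZero k := ⟨by omega⟩
  obtain ⟨v, u, hvinj, huinj, hvu, hcover, hcyc, huadj, husimp⟩ := h2
  refine ⟨hk3, fun i => ⟨v i, trivial⟩, fun i => ⟨u i, trivial⟩, ?_, ?_, ?_, ?_, ?_, ?_, ?_⟩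
  · intro i j hij
    exact hvinj (congrArg Subtype.val hij)
  · intro i j hij
    exact huinj (congrArg Subtype.val hij)
  · intro i j hij
    exact hvu i j (congrArg Subtype.val hij)
  · intro x
    rcases hcover x.1 with ⟨i, hi⟩ | ⟨i, hi⟩
    · exact Or.inl ⟨i, Subtype.ext hi⟩
    · exact Or.inr ⟨i, Subtype.ext hi⟩
  · intro i
    exact hcyc i
  · intro i x
    constructor
    · intro hadj
      rcases (huadj i x.1).1 hadj with h1 | h1
      · exact Or.inl (Subtype.ext h1)
      · exact Or.inr (Subtype.ext h1)
    · intro hx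
      rcases hx with rfl | rfl
      · exact (huadj i _).2 (Or.inl rfl)
      · exact (huadj i _).2 (Or.inr rfl)
  · intro i x y hx hy hxy
    exact husimp i x.1 y.1 hx hy (fun hh => hxy (Subtype.ext hh))

/-- For every odd integer `k ≥ 3`, no `k`-sun is S-perfect; in fact, every
`k`-sun `G` with `k` odd satisfies `α_S(G) ≠ θ_S(G)`. -/
theorem oddSun_not_SPerfect {V : Type*} [Fintype V] (G : SimpleGraph V)
    (k : ℕ) (hodd : Odd k) (hk : 3 ≤ k) (h : IsSun G k) :
    ¬ SPerfect G ∧ alphaS G ≠ thetaS G := by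
  have h1 := sun_lt G k hodd hk h
  refine ⟨fun hsp => ?_, h1.ne⟩
  have h2 := sun_lt (G.induce (Set.univ : Set V)) k hodd hk (isSun_induce_univ G k h)
  exact h2.ne (hsp Set.univ)
end

section
/- Every special path is S-perfect, i.e. if G is a graph obtained from a path P by adding, for each edge in some subset of the edges of P, a new vertex adjacent to exactly the two endpoints of that edge (distinct new vertices for distinct edges), then G is S-perfect. -/
open SimpleGraph

/-- The *special path* on the path with vertices `0, 1, …, n` (edges `i — i+1`):
for each edge index `i ∈ F`, a new vertex is added adjacent to exactly the two
endpoints `i` and `i+1` of that edge. -/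
def specialPath (n : ℕ) (F : Finset (Fin n)) :
    SimpleGraph (Fin (n + 1) ⊕ {i : Fin n // i ∈ F}) :=
  SimpleGraph.fromRel (fun a b =>
    match a, b with
    | Sum.inl a, Sum.inl b => (a.val : ℕ) + 1 = b.val
    | Sum.inl a, Sum.inr i => (a.val : ℕ) = i.1.val ∨ (a.val : ℕ) = i.1.val + 1
    | _, _ => False)

/-!
Special paths are proper interval graphs: listing the vertices as `0, t₀, 1, t₁, 2, …`
(with `tᵢ` the vertex added on the edge `i — i+1`, where present) gives an umbrella ordering,
i.e. whenever `u < v < w` and `u — w`, also `u — v` and `v — w`. This property passes to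
induced subgraphs, and for it `θ_S ≤ α_S` follows from a greedy argument: take the leftmost
vertex `u` and the rightmost vertex `d` of its closed neighbourhood, put `u` into the packing
and `d` into the dominating set, delete the closed neighbourhood of `d` and recurse. Every
remaining vertex lies to the right of `d`, and the umbrella property then keeps `u`, as well
as any two remaining vertices that are far apart, at distance at least 3. The inequality
`α_S ≤ θ_S` holds in every finite graph, since a closed neighbourhood contains at most one
vertex of an S-independent set.
-/

open Finset

namespace SimpleGraph

variable {V α : Type*} (G : SimpleGraph V)

theorem card_le_card_of_sIndepSet_of_dominatingSet {T D : Finset V} (hT : G.SIndepSet ↑T)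
    (hD : G.DominatingSet D) : T.card ≤ D.card := by
  refine card_le_card_of_forall_subsingleton (fun t d => t = d ∨ G.Adj d t)
    (fun t _ => (hD t).elim (fun ht => ⟨t, ht, .inl rfl⟩)
      fun ⟨d, hd, hdt⟩ => ⟨d, hd, .inr hdt⟩)
    fun d _ t₁ ⟨ht₁, h₁⟩ t₂ ⟨ht₂, h₂⟩ => ?_
  by_contra hne
  obtain ⟨hnadj, hnpath⟩ := hT t₁ ht₁ t₂ ht₂ hne
  rcases h₁ with rfl | h₁ <;> rcases h₂ with rfl | h₂
  · exact hne rfl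
  · exact hnadj h₂
  · exact hnadj h₁.symm
  · exact hnpath d ⟨h₁.symm, h₂⟩

theorem alphaS_le_thetaS [Finite V] : alphaS G ≤ thetaS G := by
  have := Fintype.ofFinite V
  refine le_csInf ⟨_, univ, fun v => .inl (mem_univ v), rfl⟩ ?_
  rintro _ ⟨D, hD, rfl⟩
  refine csSup_le ⟨0, ∅, by simp [SIndepSet], rfl⟩ ?_
  rintro _ ⟨T, hT, rfl⟩
  exact G.card_le_card_of_sIndepSet_of_dominatingSet hT hD

def DominatesIn (s D : Finset V) : Prop :=
  ∀ v ∈ s, v ∈ D ∨ ∃ d ∈ D, G.Adj d v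

def SSeparatedIn (s : Finset V) (u w : V) : Prop :=
  ¬ G.Adj u w ∧ ∀ x ∈ s, ¬ (G.Adj u x ∧ G.Adj x w)

def SIndepIn (s T : Finset V) : Prop :=
  ∀ u ∈ T, ∀ w ∈ T, u ≠ w → G.SSeparatedIn s u w

variable {G}

theorem SSeparatedIn.symm {s : Finset V} {u w : V} (h : G.SSeparatedIn s u w) :
    G.SSeparatedIn s w u :=
  ⟨fun hwu => h.1 hwu.symm, fun x hx ⟨hwx, hxu⟩ => h.2 x hx ⟨hxu.symm, hwx.symm⟩⟩

theorem DominatesIn.insert [DecidableEq V] {s s' D : Finset V} {d : V}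
    (hD : G.DominatesIn s' D) (hcov : ∀ x ∈ s, x ∉ s' → x = d ∨ G.Adj d x) :
    G.DominatesIn s (insert d D) := by
  intro v hv
  by_cases hvs' : v ∈ s'
  · exact (hD v hvs').imp (mem_insert_of_mem ·)
      fun ⟨e, he, hev⟩ => ⟨e, mem_insert_of_mem he, hev⟩
  rcases hcov v hv hvs' with rfl | hdv
  · exact .inl (mem_insert_self _ _)
  · exact .inr ⟨d, mem_insert_self _ _, hdv⟩

theorem SIndepIn.insert [DecidableEq V] {s T : Finset V} {u : V} (hT : G.SIndepIn s T)
    (hu : ∀ t ∈ T, G.SSeparatedIn s u t) : G.SIndepIn s (insert u T) := by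
  intro a ha b hb hab
  rcases mem_insert.1 ha with rfl | ha' <;> rcases mem_insert.1 hb with rfl | hb'
  · exact absurd rfl hab
  · exact hu b hb'
  · exact (hu a ha').symm
  · exact hT a ha' b hb' hab

variable (G) in
structure IsUmbrellaOrdering [LinearOrder α] (p : V → α) : Prop where
  injective : p.Injective
  umbrella : ∀ {u v w}, p u < p v → p v < p w → G.Adj u w → G.Adj u v ∧ G.Adj v w

namespace IsUmbrellaOrdering

variable [LinearOrder α] {p : V → α}

theorem induce (h : G.IsUmbrellaOrdering p) (s : Set V) :
    (G.induce s).IsUmbrellaOrdering (p ∘ Subtype.val) :=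
  ⟨h.injective.comp Subtype.val_injective, h.umbrella⟩

theorem lt_of_not_adj_of_leftmost (h : G.IsUmbrellaOrdering p) {s : Finset V} {u d t : V}
    (hmin : ∀ y ∈ s, p u ≤ p y) (hud : d = u ∨ G.Adj u d) (ht : t ∈ s) (htd : t ≠ d)
    (hdt : ¬ G.Adj d t) : p d < p t := by
  by_contra! hle
  have htd' : p t < p d := hle.lt_of_ne (h.injective.ne htd)
  have htu : t ≠ u := by
    rintro rfl
    exact hud.elim (fun hdu => htd hdu.symm) fun hud => hdt hud.symm
  have hut : p u < p t := (hmin t ht).lt_of_ne (h.injective.ne htu.symm)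
  have hdu : G.Adj u d := hud.resolve_left fun hdu => (hut.trans (hdu ▸ htd')).false
  exact hdt (h.umbrella hut htd' hdu).2.symm

theorem sSeparatedIn_of_rightmost_adj (h : G.IsUmbrellaOrdering p) {s : Finset V} {u d t : V}
    (hmax : ∀ y ∈ s, G.Adj u y → p y ≤ p d) (ht : t ∈ s) (hdt : p d < p t)
    (hndt : ¬ G.Adj d t) : G.SSeparatedIn s u t := by
  refine ⟨fun hut => (hmax t ht hut).not_gt hdt, ?_⟩
  rintro x hx ⟨hux, hxt⟩
  rcases (hmax x hx hux).lt_or_eq with hxd | hxd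
  · exact hndt (h.umbrella hxd hdt hxt).2
  · exact hndt (h.injective hxd ▸ hxt)

theorem sIndepIn_of_subset_union_closedNbhd (h : G.IsUmbrellaOrdering p) {s s' T : Finset V}
    {d : V} (hT : G.SIndepIn s' T) (hright : ∀ t ∈ T, p d < p t ∧ ¬ G.Adj d t)
    (hcov : ∀ x ∈ s, x ∉ s' → x = d ∨ G.Adj d x) : G.SIndepIn s T := by
  have key : ∀ a ∈ T, ∀ b, p a < p b → ¬ G.Adj a b → ∀ x, (x = d ∨ G.Adj d x) →
      ¬ (G.Adj a x ∧ G.Adj x b) := by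
    rintro a ha b hab hnab x hdx ⟨hax, hxb⟩
    obtain ⟨hda, hnda⟩ := hright a ha
    rcases lt_or_gt_of_ne (h.injective.ne hax.ne.symm) with hxa | hax'
    · exact hnab (h.umbrella hxa hab hxb).2
    · rcases hdx with rfl | hdx
      · exact (hda.trans hax').false
      · exact hnda (h.umbrella hda hax' hdx).1
  intro a ha b hb hab
  obtain ⟨hnab, hsep⟩ := hT a ha b hb hab
  refine ⟨hnab, fun x hx hx' => ?_⟩
  by_cases hxs' : x ∈ s'
  · exact hsep x hxs' hx'
  rcases lt_or_gt_of_ne (h.injective.ne hab) with hab' | hab'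
  · exact key a ha b hab' hnab x (hcov x hx hxs') hx'
  · exact key b hb a hab' (fun hba => hnab hba.symm) x (hcov x hx hxs')
      ⟨hx'.2.symm, hx'.1.symm⟩

theorem exists_dominatesIn_sIndepIn (h : G.IsUmbrellaOrdering p) (s : Finset V) :
    ∃ D T : Finset V, T ⊆ s ∧ G.DominatesIn s D ∧ G.SIndepIn s T ∧ D.card ≤ T.card := by
  classical
  induction s using Finset.strongInduction with
  | H s ih =>
  rcases s.eq_empty_or_nonempty with rfl | hne
  · exact ⟨∅, ∅, subset_rfl, by simp [DominatesIn], by simp [SIndepIn], le_rfl⟩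
  obtain ⟨u, hu, hmin⟩ := s.exists_min_image p hne
  obtain ⟨d, hdN, hmax⟩ :=
    {y ∈ s | y = u ∨ G.Adj u y}.exists_max_image p ⟨u, by simp [hu]⟩
  obtain ⟨hd, hud⟩ := mem_filter.1 hdN
  set s' := {v ∈ s | ¬ (v = d ∨ G.Adj d v)}
  have mem_s' : ∀ {v}, v ∈ s' ↔ v ∈ s ∧ ¬ (v = d ∨ G.Adj d v) := mem_filter
  have hcov : ∀ x ∈ s, x ∉ s' → x = d ∨ G.Adj d x :=
    fun x hx hxs' => not_not.1 fun hn => hxs' (mem_s'.2 ⟨hx, hn⟩)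
  have right_of_d : ∀ t ∈ s', t ∈ s ∧ p d < p t ∧ ¬ G.Adj d t := by
    intro t ht
    obtain ⟨hts, htd⟩ := mem_s'.1 ht
    rw [not_or] at htd
    exact ⟨hts, h.lt_of_not_adj_of_leftmost hmin hud hts htd.1 htd.2, htd.2⟩
  obtain ⟨D, T, hTs', hD, hT, hcard⟩ := ih s' (filter_ssubset.2 ⟨d, hd, by simp⟩)
  have huT : u ∉ T := fun huT => (right_of_d u (hTs' huT)).2.1.not_ge (hmin d hd)
  have hTs : G.SIndepIn s T := h.sIndepIn_of_subset_union_closedNbhd hT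
    (fun t ht => (right_of_d t (hTs' ht)).2) hcov
  refine ⟨insert d D, insert u T, insert_subset hu (hTs'.trans (filter_subset _ _)),
    hD.insert hcov, hTs.insert fun t ht => ?_, ?_⟩
  · obtain ⟨hts, hdt, hndt⟩ := right_of_d t (hTs' ht)
    exact h.sSeparatedIn_of_rightmost_adj
      (fun y hy huy => hmax y (mem_filter.2 ⟨hy, .inr huy⟩)) hts hdt hndt
  · calc (insert d D).card ≤ D.card + 1 := card_insert_le _ _
      _ ≤ T.card + 1 := by omega
      _ = (insert u T).card := (card_insert_of_notMem huT).symm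

theorem thetaS_le_alphaS [Finite V] (h : G.IsUmbrellaOrdering p) : thetaS G ≤ alphaS G := by
  have := Fintype.ofFinite V
  obtain ⟨D, T, -, hD, hT, hcard⟩ := h.exists_dominatesIn_sIndepIn univ
  have hBdd : BddAbove {n | ∃ T : Finset V, G.SIndepSet ↑T ∧ T.card = n} :=
    ⟨Fintype.card V, by rintro _ ⟨T, -, rfl⟩; exact card_le_univ T⟩
  calc thetaS G ≤ D.card := Nat.sInf_le ⟨D, fun v => hD v (mem_univ v), rfl⟩
    _ ≤ T.card := hcard
    _ ≤ alphaS G := le_csSup hBdd ⟨T, fun a ha b hb hab =>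
      ⟨(hT a ha b hb hab).1, fun x => (hT a ha b hb hab).2 x (mem_univ x)⟩, rfl⟩

theorem sPerfect [Finite V] (h : G.IsUmbrellaOrdering p) : SPerfect G :=
  fun s => le_antisymm (alphaS_le_thetaS _) (h.induce s).thetaS_le_alphaS

end IsUmbrellaOrdering

end SimpleGraph

def specialPathPos {n : ℕ} {F : Finset (Fin n)} : Fin (n + 1) ⊕ {i : Fin n // i ∈ F} → ℕ
  | Sum.inl a => 2 * a.val
  | Sum.inr i => 2 * i.1.val + 1

theorem specialPathPos_injective {n : ℕ} {F : Finset (Fin n)} :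
    (specialPathPos (F := F)).Injective := by
  rintro (a | i) (b | j) h <;> simp only [specialPathPos] at h <;> grind

theorem specialPath_adj_iff {n : ℕ} {F : Finset (Fin n)}
    {u v : Fin (n + 1) ⊕ {i : Fin n // i ∈ F}} :
    (specialPath n F).Adj u v ↔
      specialPathPos u + 1 = specialPathPos v ∨ specialPathPos v + 1 = specialPathPos u ∨
        (specialPathPos u + 2 = specialPathPos v ∧ Even (specialPathPos u)) ∨
        (specialPathPos v + 2 = specialPathPos u ∧ Even (specialPathPos v)) := by
  rcases u with a | ⟨i, hi⟩ <;> rcases v with b | ⟨j, hj⟩ <;>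
    simp only [specialPath, fromRel_adj, specialPathPos, ne_eq, Sum.inl.injEq, Sum.inr.injEq,
      Subtype.mk.injEq, Fin.ext_iff, reduceCtorEq, not_false_eq_true, true_and, or_false,
      false_or, and_false, false_iff, Nat.even_iff] <;> omega

theorem specialPath_isUmbrellaOrdering (n : ℕ) (F : Finset (Fin n)) :
    (specialPath n F).IsUmbrellaOrdering specialPathPos where
  injective := specialPathPos_injective
  umbrella huv hvw huw := by
    simp only [specialPath_adj_iff, Nat.even_iff] at huw ⊢
    omega

/-- Every special path is S-perfect: any graph obtained from a path by adding, for
each edge in some subset of the edges of the path, a new vertex adjacent to exactly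
the two endpoints of that edge, is S-perfect. -/
theorem specialPath_SPerfect (n : ℕ) (F : Finset (Fin n)) :
    SPerfect (specialPath n F) :=
  (specialPath_isUmbrellaOrdering n F).sPerfect
end
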